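/- Let p(x) be an irreducible cubic polynomial over ℚ with three distinct real roots r₁, r₂, r₃ which pairwise have common tails. Then the splitting field of p over ℚ has degree 3; equivalently, for any root rᵢ, all three roots lie in ℚ(rᵢ). -/

import Mathlib

/-- The sequence of complete quotients of the continued fraction expansion of `x`:
`cfTerm x 0 = x` and `cfTerm x (n+1) = 1 / (cfTerm x n - ⌊cfTerm x n⌋)`. -/
noncomputable def cfTerm (x : ℝ) : ℕ → ℝ
  | 0 => x
  | n + 1 => (cfTerm x n - ⌊cfTerm x n⌋)⁻¹

/-- The `n`-th partial quotient (digit) of the simple continued fraction expansion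
`[x₀; x₁, x₂, …]` of `x`. -/
noncomputable def cfDigit (x : ℝ) (n : ℕ) : ℤ := ⌊cfTerm x n⌋

/-- Two real numbers have *common tails* if their continued fraction expansions
eventually agree: there exist `m n` with `s_{m+k} = t_{n+k}` for all `k ≥ 0`. -/
def CommonTails (s t : ℝ) : Prop :=
  ∃ m n : ℕ, ∀ k : ℕ, cfDigit s (m + k) = cfDigit t (n + k)

open Polynomial IntermediateField

lemma cfTerm_succ (x : ℝ) (n : ℕ) :
    cfTerm x (n + 1) = (cfTerm x n - ⌊cfTerm x n⌋)⁻¹ := rfl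

lemma cfTerm_succ' (x : ℝ) (n : ℕ) :
    cfTerm x (n + 1) = (Int.fract (cfTerm x n))⁻¹ := by
  rw [cfTerm_succ, Int.self_sub_floor]

lemma cfTerm_irrational {x : ℝ} (hx : Irrational x) : ∀ n, Irrational (cfTerm x n)
  | 0 => hx
  | n + 1 => by
    rw [cfTerm_succ]
    exact ((cfTerm_irrational hx n).sub_intCast _).inv

lemma one_lt_cfTerm {x : ℝ} (hx : Irrational x) (n : ℕ) : 1 < cfTerm x (n + 1) := by
  rw [cfTerm_succ']
  rw [one_lt_inv_iff₀]
  refine ⟨?_, Int.fract_lt_one _⟩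
  rcases lt_or_eq_of_le (Int.fract_nonneg (cfTerm x n)) with h | h
  · exact h
  · exfalso
    have := (cfTerm_irrational hx n).sub_intCast ⌊cfTerm x n⌋
    rw [Int.self_sub_floor, ← h] at this
    exact this ⟨0, by norm_num⟩

/-- The basic recurrence: `xₙ = aₙ + 1/xₙ₊₁`. -/
lemma cfTerm_eq (x : ℝ) (n : ℕ) :
    cfTerm x n = (cfDigit x n : ℝ) + (cfTerm x (n + 1))⁻¹ := by
  rw [cfTerm_succ, inv_inv, cfDigit]
  ring

lemma one_le_cfDigit {x : ℝ} (hx : Irrational x) (n : ℕ) : 1 ≤ cfDigit x (n + 1) := by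
  rw [cfDigit, Int.le_floor]
  exact_mod_cast (one_lt_cfTerm hx n).le

lemma cfTerm_cfTerm (x : ℝ) (m : ℕ) : ∀ k, cfTerm (cfTerm x m) k = cfTerm x (m + k)
  | 0 => rfl
  | k + 1 => by
    rw [cfTerm_succ, cfTerm_cfTerm x m k, ← Nat.add_assoc, cfTerm_succ]

lemma cfDigit_cfTerm (x : ℝ) (m k : ℕ) : cfDigit (cfTerm x m) k = cfDigit x (m + k) := by
  rw [cfDigit, cfDigit, cfTerm_cfTerm]

/-- One-step contraction identity. -/
lemma cf_step {x y : ℝ} (hx : Irrational x) (hy : Irrational y)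
    (h : ∀ k, cfDigit x k = cfDigit y k) (n : ℕ) :
    |cfTerm x n - cfTerm y n| * (cfTerm x (n + 1) * cfTerm y (n + 1))
      = |cfTerm x (n + 1) - cfTerm y (n + 1)| := by
  have hX : (1 : ℝ) < cfTerm x (n + 1) := one_lt_cfTerm hx n
  have hY : (1 : ℝ) < cfTerm y (n + 1) := one_lt_cfTerm hy n
  have hX0 : cfTerm x (n + 1) ≠ 0 := by linarith
  have hY0 : cfTerm y (n + 1) ≠ 0 := by linarith
  have hd : cfTerm x n - cfTerm y n
      = (cfTerm x (n + 1))⁻¹ - (cfTerm y (n + 1))⁻¹ := by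
    rw [cfTerm_eq x n, cfTerm_eq y n, h n]; ring
  have hd2 : (cfTerm x (n + 1))⁻¹ - (cfTerm y (n + 1))⁻¹
      = (cfTerm y (n + 1) - cfTerm x (n + 1)) / (cfTerm x (n + 1) * cfTerm y (n + 1)) := by
    field_simp
  rw [hd, hd2, abs_div, abs_of_pos (by positivity : (0:ℝ) < cfTerm x (n + 1) * cfTerm y (n + 1)),
    div_mul_cancel₀ _ (by positivity), abs_sub_comm]

lemma cf_pair_prod {x : ℝ} (hx : Irrational x) (n : ℕ) :
    2 < cfTerm x (n + 1) * cfTerm x (n + 2) := by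
  have h1 : cfTerm x (n + 1) = (cfDigit x (n + 1) : ℝ) + (cfTerm x (n + 2))⁻¹ := cfTerm_eq x (n + 1)
  have h2 : (1 : ℝ) ≤ (cfDigit x (n + 1) : ℝ) := by exact_mod_cast one_le_cfDigit hx n
  have h3 : (1 : ℝ) < cfTerm x (n + 2) := one_lt_cfTerm hx (n + 1)
  have h4 : cfTerm x (n + 2) ≠ 0 := by linarith
  have : cfTerm x (n + 1) * cfTerm x (n + 2)
      = (cfDigit x (n + 1) : ℝ) * cfTerm x (n + 2) + 1 := by
    rw [h1]; field_simp
  rw [this]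
  nlinarith

lemma cf_two_step {x y : ℝ} (hx : Irrational x) (hy : Irrational y)
    (h : ∀ k, cfDigit x k = cfDigit y k) (n : ℕ) :
    4 * |cfTerm x n - cfTerm y n| ≤ |cfTerm x (n + 2) - cfTerm y (n + 2)| := by
  have s1 := cf_step hx hy h n
  have s2 := cf_step hx hy h (n + 1)
  have p1 := cf_pair_prod hx n
  have p2 := cf_pair_prod hy n
  have a0 : (0:ℝ) ≤ |cfTerm x n - cfTerm y n| := abs_nonneg _
  have a1 : (0:ℝ) ≤ |cfTerm x (n + 1) - cfTerm y (n + 1)| := abs_nonneg _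
  have hX1 : (1 : ℝ) < cfTerm x (n + 1) := one_lt_cfTerm hx n
  have hY1 : (1 : ℝ) < cfTerm y (n + 1) := one_lt_cfTerm hy n
  have hX2 : (1 : ℝ) < cfTerm x (n + 2) := one_lt_cfTerm hx (n + 1)
  have hY2 : (1 : ℝ) < cfTerm y (n + 2) := one_lt_cfTerm hy (n + 1)
  have key : |cfTerm x n - cfTerm y n|
      * ((cfTerm x (n + 1) * cfTerm x (n + 2)) * (cfTerm y (n + 1) * cfTerm y (n + 2)))
      = |cfTerm x (n + 2) - cfTerm y (n + 2)| := by
    have : n + 1 + 1 = n + 2 := rfl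
    rw [← this, ← s2, ← s1]; ring
  have hAB : (4:ℝ) < (cfTerm x (n + 1) * cfTerm x (n + 2)) * (cfTerm y (n + 1) * cfTerm y (n + 2)) := by
    nlinarith
  have := mul_le_mul_of_nonneg_left hAB.le a0
  nlinarith

lemma cf_diff_lt_one {x y : ℝ} (h : ∀ k, cfDigit x k = cfDigit y k) (n : ℕ) :
    |cfTerm x n - cfTerm y n| < 1 := by
  have hfx := Int.fract_nonneg (cfTerm x n)
  have hfy := Int.fract_nonneg (cfTerm y n)
  have hfx1 := Int.fract_lt_one (cfTerm x n)
  have hfy1 := Int.fract_lt_one (cfTerm y n)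
  have hfl0 : ⌊cfTerm x n⌋ = ⌊cfTerm y n⌋ := h n
  have hfl : (⌊cfTerm x n⌋ : ℝ) = (⌊cfTerm y n⌋ : ℝ) := by exact_mod_cast hfl0
  have hx : cfTerm x n = Int.fract (cfTerm x n) + (⌊cfTerm x n⌋ : ℝ) := by
    rw [← Int.self_sub_floor]; ring
  have hy : cfTerm y n = Int.fract (cfTerm y n) + (⌊cfTerm y n⌋ : ℝ) := by
    rw [← Int.self_sub_floor]; ring
  rw [abs_lt]
  constructor <;> [skip; skip] <;> rw [hx, hy, hfl] <;> linarith

lemma cf_eq_of_digits_eq {x y : ℝ} (hx : Irrational x) (hy : Irrational y)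
    (h : ∀ k, cfDigit x k = cfDigit y k) : x = y := by
  have claim : ∀ m : ℕ, |x - y| ≤ (1 / 4 : ℝ) ^ m * |cfTerm x (2 * m) - cfTerm y (2 * m)| := by
    intro m
    induction m with
    | zero => simp [cfTerm]
    | succ m ih =>
      have h2 : 2 * (m + 1) = 2 * m + 2 := by ring
      rw [h2]
      have := cf_two_step hx hy h (2 * m)
      have hp : (0:ℝ) < (1 / 4 : ℝ) ^ m := by positivity
      calc |x - y| ≤ (1 / 4 : ℝ) ^ m * |cfTerm x (2 * m) - cfTerm y (2 * m)| := ih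
        _ ≤ (1 / 4 : ℝ) ^ m * (|cfTerm x (2 * m + 2) - cfTerm y (2 * m + 2)| / 4) := by
            apply mul_le_mul_of_nonneg_left _ hp.le
            linarith
        _ = (1 / 4 : ℝ) ^ (m + 1) * |cfTerm x (2 * m + 2) - cfTerm y (2 * m + 2)| := by
            ring
  have hle : ∀ m : ℕ, |x - y| ≤ (1 / 4 : ℝ) ^ m := by
    intro m
    calc |x - y| ≤ (1 / 4 : ℝ) ^ m * |cfTerm x (2 * m) - cfTerm y (2 * m)| := claim m
      _ ≤ (1 / 4 : ℝ) ^ m * 1 := by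
          apply mul_le_mul_of_nonneg_left (cf_diff_lt_one h (2 * m)).le (by positivity)
      _ = (1 / 4 : ℝ) ^ m := by ring
  have h0 : |x - y| ≤ 0 := by
    by_contra hc
    push_neg at hc
    obtain ⟨m, hm⟩ := exists_pow_lt_of_lt_one hc (by norm_num : (1 / 4 : ℝ) < 1)
    exact absurd (hle m) (not_le.mpr hm)
  have := abs_nonneg (x - y)
  have : |x - y| = 0 := le_antisymm h0 this
  have := abs_eq_zero.mp this
  linarith [sub_eq_zero.mp this]

lemma cfTerm_mem (x : ℝ) (n : ℕ) :
    cfTerm x n ∈ IntermediateField.adjoin ℚ ({x} : Set ℝ) := by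
  induction n with
  | zero => exact IntermediateField.mem_adjoin_simple_self ℚ x
  | succ n ih =>
    rw [cfTerm_succ]
    exact inv_mem (sub_mem ih (intCast_mem _ _))

lemma mem_adjoin_cfTerm (x : ℝ) (n : ℕ) :
    x ∈ IntermediateField.adjoin ℚ ({cfTerm x n} : Set ℝ) := by
  induction n with
  | zero => exact IntermediateField.mem_adjoin_simple_self ℚ x
  | succ n ih =>
    have hmem : cfTerm x n ∈ IntermediateField.adjoin ℚ ({cfTerm x (n + 1)} : Set ℝ) := by
      rw [cfTerm_eq x n]
      exact add_mem (intCast_mem _ _)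
        (inv_mem (IntermediateField.mem_adjoin_simple_self ℚ _))
    have hle : IntermediateField.adjoin ℚ ({cfTerm x n} : Set ℝ)
        ≤ IntermediateField.adjoin ℚ ({cfTerm x (n + 1)} : Set ℝ) := by
      rw [IntermediateField.adjoin_le_iff, Set.singleton_subset_iff]
      exact hmem
    exact hle ih

lemma mem_of_commonTails {s t : ℝ} (hs : Irrational s) (ht : Irrational t)
    (hct : CommonTails s t) :
    t ∈ IntermediateField.adjoin ℚ ({s} : Set ℝ) := by
  obtain ⟨m, n, h⟩ := hct
  have key : cfTerm s m = cfTerm t n := by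
    apply cf_eq_of_digits_eq (cfTerm_irrational hs m) (cfTerm_irrational ht n)
    intro k
    rw [cfDigit_cfTerm, cfDigit_cfTerm]
    exact h k
  have h1 : t ∈ IntermediateField.adjoin ℚ ({cfTerm s m} : Set ℝ) := by
    rw [key]; exact mem_adjoin_cfTerm t n
  have hle : IntermediateField.adjoin ℚ ({cfTerm s m} : Set ℝ)
      ≤ IntermediateField.adjoin ℚ ({s} : Set ℝ) := by
    rw [IntermediateField.adjoin_le_iff, Set.singleton_subset_iff]
    exact cfTerm_mem s m
  exact hle h1

lemma commonTails_symm {s t : ℝ} (h : CommonTails s t) : CommonTails t s := by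
  obtain ⟨m, n, h⟩ := h
  exact ⟨n, m, fun k => (h k).symm⟩

lemma irrational_of_root {p : Polynomial ℚ} (hdeg : p.degree = 3) (hirr : Irreducible p)
    {r : ℝ} (hr : Polynomial.aeval r p = 0) : Irrational r := by
  rintro ⟨q, hq⟩
  have hq' : Polynomial.aeval ((q : ℝ)) p = 0 := by rw [hq]; exact hr
  have heval : p.eval q = 0 := by
    have hcast : ((p.eval q : ℚ) : ℝ) = 0 := by
      rw [← hq']
      rw [Polynomial.aeval_def, show ((q : ℝ)) = algebraMap ℚ ℝ q from (eq_ratCast (algebraMap ℚ ℝ) q).symm,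
        Polynomial.eval₂_hom]
      simp
    exact_mod_cast hcast
  have hdvd : Polynomial.X - Polynomial.C q ∣ p := Polynomial.dvd_iff_isRoot.mpr heval
  obtain ⟨u, hu⟩ := hdvd
  rcases hirr.isUnit_or_isUnit hu with h | h
  · exact Polynomial.not_isUnit_X_sub_C q h
  · have := Polynomial.degree_eq_zero_of_isUnit h
    have hX : (Polynomial.X - Polynomial.C q).degree = 1 := Polynomial.degree_X_sub_C q
    have : p.degree = 1 := by
      rw [hu, Polynomial.degree_mul, hX, this]; rfl
    rw [hdeg] at this
    exact absurd this (by norm_num)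

/-- If an irreducible cubic over ℚ has three distinct real roots that pairwise have common
tails, then its splitting field has degree 3 over ℚ; equivalently, each root lies in the
field generated by any one of the roots. -/
theorem roots_common_tails_stmt_7 (p : Polynomial ℚ) (hdeg : p.degree = 3)
    (hirr : Irreducible p)
    (r₁ r₂ r₃ : ℝ) (h12 : r₁ ≠ r₂) (h13 : r₁ ≠ r₃) (h23 : r₂ ≠ r₃)
    (hr₁ : Polynomial.aeval r₁ p = 0) (hr₂ : Polynomial.aeval r₂ p = 0)
    (hr₃ : Polynomial.aeval r₃ p = 0)
    (hct12 : CommonTails r₁ r₂) (hct23 : CommonTails r₂ r₃) (hct13 : CommonTails r₁ r₃) :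
    Module.finrank ℚ (IntermediateField.adjoin ℚ ({r₁, r₂, r₃} : Set ℝ)) = 3 ∧
      ∀ ri ∈ ({r₁, r₂, r₃} : Set ℝ), ∀ rj ∈ ({r₁, r₂, r₃} : Set ℝ),
        rj ∈ IntermediateField.adjoin ℚ ({ri} : Set ℝ) := by
  have hi1 : Irrational r₁ := irrational_of_root hdeg hirr hr₁
  have hi2 : Irrational r₂ := irrational_of_root hdeg hirr hr₂
  have hi3 : Irrational r₃ := irrational_of_root hdeg hirr hr₃
  -- all nine memberships
  have m12 : r₂ ∈ IntermediateField.adjoin ℚ ({r₁} : Set ℝ) := mem_of_commonTails hi1 hi2 hct12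
  have m13 : r₃ ∈ IntermediateField.adjoin ℚ ({r₁} : Set ℝ) := mem_of_commonTails hi1 hi3 hct13
  have m21 : r₁ ∈ IntermediateField.adjoin ℚ ({r₂} : Set ℝ) :=
    mem_of_commonTails hi2 hi1 (commonTails_symm hct12)
  have m23 : r₃ ∈ IntermediateField.adjoin ℚ ({r₂} : Set ℝ) := mem_of_commonTails hi2 hi3 hct23
  have m31 : r₁ ∈ IntermediateField.adjoin ℚ ({r₃} : Set ℝ) :=
    mem_of_commonTails hi3 hi1 (commonTails_symm hct13)
  have m32 : r₂ ∈ IntermediateField.adjoin ℚ ({r₃} : Set ℝ) :=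
    mem_of_commonTails hi3 hi2 (commonTails_symm hct23)
  have self1 : r₁ ∈ IntermediateField.adjoin ℚ ({r₁} : Set ℝ) :=
    IntermediateField.mem_adjoin_simple_self ℚ r₁
  have self2 : r₂ ∈ IntermediateField.adjoin ℚ ({r₂} : Set ℝ) :=
    IntermediateField.mem_adjoin_simple_self ℚ r₂
  have self3 : r₃ ∈ IntermediateField.adjoin ℚ ({r₃} : Set ℝ) :=
    IntermediateField.mem_adjoin_simple_self ℚ r₃
  constructor
  · -- degree part
    have hadj : IntermediateField.adjoin ℚ ({r₁, r₂, r₃} : Set ℝ)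
        = IntermediateField.adjoin ℚ ({r₁} : Set ℝ) := by
      apply le_antisymm
      · rw [IntermediateField.adjoin_le_iff]
        intro z hz
        simp only [Set.mem_insert_iff, Set.mem_singleton_iff] at hz
        rcases hz with rfl | rfl | rfl
        · exact self1
        · exact m12
        · exact m13
      · exact IntermediateField.adjoin.mono ℚ _ _ (by simp)
    rw [hadj]
    have hp0 : p ≠ 0 := hirr.ne_zero
    have hint : IsIntegral ℚ r₁ := by
      have halg : IsAlgebraic ℚ r₁ := ⟨p, hp0, hr₁⟩
      exact halg.isIntegral
    rw [IntermediateField.adjoin.finrank hint]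
    have hmin : p * Polynomial.C p.leadingCoeff⁻¹ = minpoly ℚ r₁ :=
      minpoly.eq_of_irreducible hirr hr₁
    have hlc : p.leadingCoeff⁻¹ ≠ 0 := by
      simp [Polynomial.leadingCoeff_ne_zero.mpr hp0]
    have : (minpoly ℚ r₁).natDegree = p.natDegree := by
      rw [← hmin, Polynomial.natDegree_mul_C hlc]
    rw [this]
    have : p.natDegree = 3 := Polynomial.natDegree_eq_of_degree_eq_some hdeg
    exact this
  · intro ri hri rj hrj
    simp only [Set.mem_insert_iff, Set.mem_singleton_iff] at hri hrj
    rcases hri with rfl | rfl | rfl <;> rcases hrj with rfl | rfl | rfl <;>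
      first
        | exact self1 | exact self2 | exact self3
        | exact m12 | exact m13 | exact m21 | exact m23 | exact m31 | exact m32
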